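/- Partial derivatives are derivations of the Moyal–Weyl product: for every variable v ∈ Fin m ⊕ Fin m and all a, b ∈ A = MvPolynomial (Fin m ⊕ Fin m) (Polynomial ℂ), one has ∂_v(a ∘ b) = (∂_v a) ∘ b + a ∘ (∂_v b). -/

import Mathlib

open TensorProduct

noncomputable section

/-- The phase-space polynomial algebra `A = ℂ[ħ][q_1,…,q_m,p_1,…,p_m]`:
multivariate polynomials in the `2m` variables indexed by `Fin m ⊕ Fin m`
(where `Sum.inl i` indexes `q_i` and `Sum.inr i` indexes `p_i`) with
coefficients in `ℂ[ħ] = Polynomial ℂ`. -/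
abbrev PhaseAlg (m : ℕ) := MvPolynomial (Fin m ⊕ Fin m) (Polynomial ℂ)
instance instAddCommGroupPhaseAlg (m : ℕ) : AddCommGroup (PhaseAlg m) := inferInstance

/-- The Poisson bivector operator
`Π̂ = Σ_i (∂_{q_i} ⊗ ∂_{p_i} − ∂_{p_i} ⊗ ∂_{q_i})` on `A ⊗ A`. -/
def PiHat (m : ℕ) :
    PhaseAlg m ⊗[Polynomial ℂ] PhaseAlg m →ₗ[Polynomial ℂ]
      PhaseAlg m ⊗[Polynomial ℂ] PhaseAlg m :=
  ∑ i : Fin m,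
    ((TensorProduct.map (MvPolynomial.pderiv (Sum.inl i)).toLinearMap
        (MvPolynomial.pderiv (Sum.inr i)).toLinearMap :
        PhaseAlg m ⊗[Polynomial ℂ] PhaseAlg m →ₗ[Polynomial ℂ]
          PhaseAlg m ⊗[Polynomial ℂ] PhaseAlg m)
      - (TensorProduct.map (MvPolynomial.pderiv (Sum.inr i)).toLinearMap
        (MvPolynomial.pderiv (Sum.inl i)).toLinearMap :
        PhaseAlg m ⊗[Polynomial ℂ] PhaseAlg m →ₗ[Polynomial ℂ]
          PhaseAlg m ⊗[Polynomial ℂ] PhaseAlg m))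

/-- The Moyal--Weyl star product
`a ∘ b = Σ_{k ≥ 0} ((−iħ)^k / k!) · μ(Π̂^k(a ⊗ b))`; the sum is finite since
`Π̂^k (a ⊗ b) = 0` as soon as `k` exceeds the total degrees of `a` and `b`, so it
may be truncated at `k = totalDegree a + totalDegree b`. -/
def moyal {m : ℕ} (a b : PhaseAlg m) : PhaseAlg m :=
  ∑ k ∈ Finset.range (a.totalDegree + b.totalDegree + 1),
    ((k.factorial : ℂ)⁻¹ * (-Complex.I) ^ k) •
      (MvPolynomial.C (Polynomial.X ^ k) *
        LinearMap.mul' (Polynomial ℂ) (PhaseAlg m) ((PiHat m ^ k) (a ⊗ₜ[Polynomial ℂ] b)))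


/-!
Write `D_v = ∂_v ⊗ 1 + 1 ⊗ ∂_v` on `A ⊗ A`. The Leibniz rule says `∂_v ∘ μ = μ ∘ D_v`, and
`D_v` commutes with `Π̂` because partial derivatives commute. So `∂_v` of the `k`-th term of
`a ∘ b` is the `k`-th term evaluated at `D_v (a ⊗ b) = ∂_v a ⊗ b + a ⊗ ∂_v b`.

The sums defining the three star products are truncated at different degrees; they can be
compared because `Π̂` lowers the degree of the left tensor factor, so that
`Π̂^k (a ⊗ b) = 0` for `k > deg a`.
-/

open MvPolynomial TensorProduct

section PDeriv

variable {σ R : Type*} [CommSemiring R]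

theorem commute_pderiv_pderiv (i j : σ) :
    Commute (pderiv i : Derivation R (MvPolynomial σ R) _).toLinearMap (pderiv j).toLinearMap := by
  classical
  refine LinearMap.ext fun f => ?_
  induction f using MvPolynomial.induction_on with
  | C r => simp
  | add p q hp hq => simp_all
  | mul_X p k ih =>
    simp only [Module.End.mul_apply, Derivation.coeFn_coe] at ih ⊢
    simp only [pderiv_mul, map_add, pderiv_X, ih, Pi.single_apply]
    split_ifs <;> simp
    ring

theorem totalDegree_pderiv_le (i : σ) (f : MvPolynomial σ R) :
    (pderiv i f).totalDegree ≤ f.totalDegree - 1 := by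
  classical
  refine Finset.sup_le fun s hs => ?_
  rw [mem_support_iff, coeff_pderiv] at hs
  have hdeg := le_totalDegree (mem_support_iff.mpr (left_ne_zero_of_mul hs))
  rw [Finsupp.sum_add_index' (fun _ => rfl) (fun _ _ _ => rfl), Finsupp.sum_single_index rfl]
    at hdeg
  omega

theorem pderiv_eq_zero_of_totalDegree_eq_zero (i : σ) {f : MvPolynomial σ R}
    (h : f.totalDegree = 0) : pderiv i f = 0 := by
  rw [totalDegree_eq_zero_iff_eq_C.mp h, pderiv_C]

end PDeriv

section TensorDerivation

open LinearMap

variable {R : Type*} [CommSemiring R]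

theorem commute_rTensor_add_lTensor_map {M : Type*} [AddCommMonoid M] [Module R M]
    {d f g : Module.End R M} (hf : Commute d f) (hg : Commute d g) :
    Commute (d.rTensor M + d.lTensor M) (TensorProduct.map f g) :=
  TensorProduct.ext' fun x y => by
    have hf' : ∀ x, d (f x) = f (d x) := LinearMap.congr_fun hf.eq
    have hg' : ∀ y, d (g y) = g (d y) := LinearMap.congr_fun hg.eq
    simp [Module.End.mul_apply, hf', hg']

theorem Derivation.toLinearMap_comp_mul' {A : Type*} [CommSemiring A] [Algebra R A]
    (D : Derivation R A A) :
    D.toLinearMap ∘ₗ mul' R A = mul' R A ∘ₗ (D.toLinearMap.rTensor A + D.toLinearMap.lTensor A) :=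
  TensorProduct.ext' fun x y => by simp [add_comm, mul_comm]

end TensorDerivation

section PhaseSpace

variable {m : ℕ}

local notation "ℂ[ħ]" => Polynomial ℂ

theorem PiHat_tmul (x y : PhaseAlg m) :
    PiHat m (x ⊗ₜ y) = ∑ i : Fin m,
      (pderiv (Sum.inl i) x ⊗ₜ pderiv (Sum.inr i) y -
        pderiv (Sum.inr i) x ⊗ₜ pderiv (Sum.inl i) y) := by
  simp [PiHat, LinearMap.sum_apply]

def pderivTensor (v : Fin m ⊕ Fin m) : Module.End ℂ[ħ] (PhaseAlg m ⊗[ℂ[ħ]] PhaseAlg m) :=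
  (pderiv v).toLinearMap.rTensor (PhaseAlg m) + (pderiv v).toLinearMap.lTensor (PhaseAlg m)

theorem pderivTensor_tmul (v : Fin m ⊕ Fin m) (x y : PhaseAlg m) :
    pderivTensor v (x ⊗ₜ y) = pderiv v x ⊗ₜ y + x ⊗ₜ pderiv v y := by
  simp [pderivTensor]

theorem commute_pderivTensor_PiHat (v : Fin m ⊕ Fin m) : Commute (pderivTensor v) (PiHat m) := by
  have h (i j : Fin m ⊕ Fin m) := commute_rTensor_add_lTensor_map
    (commute_pderiv_pderiv (R := ℂ[ħ]) v i) (commute_pderiv_pderiv v j)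
  exact Commute.sum_right _ _ _ fun i _ =>
    Commute.sub_right (R := Module.End ℂ[ħ] (PhaseAlg m ⊗[ℂ[ħ]] PhaseAlg m)) (h _ _) (h _ _)

def leftDegreeLE (n : ℕ) : Submodule ℂ[ħ] (PhaseAlg m ⊗[ℂ[ħ]] PhaseAlg m) :=
  Submodule.span ℂ[ħ] {x | ∃ u w : PhaseAlg m, u.totalDegree ≤ n ∧ x = u ⊗ₜ w}

theorem tmul_mem_leftDegreeLE {n : ℕ} {u : PhaseAlg m} (hu : u.totalDegree ≤ n)
    (w : PhaseAlg m) :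
    u ⊗ₜ w ∈ leftDegreeLE n :=
  Submodule.subset_span ⟨u, w, hu, rfl⟩

theorem leftDegreeLE_succ_le_comap_PiHat (n : ℕ) :
    leftDegreeLE (n + 1) ≤ (leftDegreeLE n).comap (PiHat m) := by
  refine Submodule.span_le.mpr ?_
  rintro _ ⟨u, w, hu, rfl⟩
  have hu' (i) : (pderiv i u).totalDegree ≤ n := (totalDegree_pderiv_le i u).trans (by omega)
  rw [SetLike.mem_coe, Submodule.mem_comap, PiHat_tmul]
  exact Submodule.sum_mem _ fun i _ =>
    Submodule.sub_mem _ (tmul_mem_leftDegreeLE (hu' _) _) (tmul_mem_leftDegreeLE (hu' _) _)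

theorem leftDegreeLE_zero_le_ker_PiHat : leftDegreeLE 0 ≤ LinearMap.ker (PiHat m) := by
  refine Submodule.span_le.mpr ?_
  rintro _ ⟨u, w, hu, rfl⟩
  simp [PiHat_tmul, pderiv_eq_zero_of_totalDegree_eq_zero _ (Nat.le_zero.mp hu)]

theorem PiHat_pow_succ_eq_zero {n : ℕ} {x} (hx : x ∈ leftDegreeLE n) :
    (PiHat m ^ (n + 1)) x = 0 := by
  induction n generalizing x with
  | zero => simpa using leftDegreeLE_zero_le_ker_PiHat hx
  | succ n ih => rw [pow_succ, Module.End.mul_apply, ih (leftDegreeLE_succ_le_comap_PiHat n hx)]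

theorem PiHat_pow_tmul_eq_zero {k : ℕ} {a : PhaseAlg m} (h : a.totalDegree < k)
    (b : PhaseAlg m) :
    (PiHat m ^ k) (a ⊗ₜ b) = 0 := by
  obtain ⟨r, rfl⟩ := Nat.exists_eq_add_of_le' h
  rw [pow_add, Module.End.mul_apply,
    PiHat_pow_succ_eq_zero (tmul_mem_leftDegreeLE le_rfl b), map_zero]

def moyalTerm (k : ℕ) (x : PhaseAlg m ⊗[ℂ[ħ]] PhaseAlg m) : PhaseAlg m :=
  ((k.factorial : ℂ)⁻¹ * (-Complex.I) ^ k) •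
    (C (Polynomial.X ^ k) * LinearMap.mul' ℂ[ħ] (PhaseAlg m) ((PiHat m ^ k) x))

theorem moyalTerm_add (k : ℕ) (x y : PhaseAlg m ⊗[ℂ[ħ]] PhaseAlg m) :
    moyalTerm k (x + y) = moyalTerm k x + moyalTerm k y := by
  simp only [moyalTerm, map_add, mul_add, smul_add]

theorem moyal_eq_sum_moyalTerm {a : PhaseAlg m} {N : ℕ} (h : a.totalDegree < N)
    (b : PhaseAlg m) :
    moyal a b = ∑ k ∈ Finset.range N, moyalTerm k (a ⊗ₜ b) := by
  have hzero : ∀ k ≥ a.totalDegree + 1, moyalTerm k (a ⊗ₜ b) = 0 := fun k hk => by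
    simp [moyalTerm, PiHat_pow_tmul_eq_zero (Nat.lt_of_succ_le hk)]
  rw [Finset.eventually_constant_sum hzero h, moyal,
    ← Finset.eventually_constant_sum hzero (n := a.totalDegree + b.totalDegree + 1) (by omega)]
  rfl

theorem pderiv_moyalTerm (v : Fin m ⊕ Fin m) (k : ℕ) (x : PhaseAlg m ⊗[ℂ[ħ]] PhaseAlg m) :
    pderiv v (moyalTerm k x) = moyalTerm k (pderivTensor v x) := by
  have hleibniz :=
    LinearMap.congr_fun (Derivation.toLinearMap_comp_mul' (pderiv v)) ((PiHat m ^ k) x)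
  have hcomm := LinearMap.congr_fun ((commute_pderivTensor_PiHat v).pow_right k).eq x
  simp only [moyalTerm, Derivation.map_smul_of_tower, pderiv_C_mul]
  rw [← Module.End.mul_apply, ← hcomm]
  exact congr(_ • (C _ * $hleibniz))

end PhaseSpace

/-- Partial derivatives are derivations of the Moyal--Weyl product. -/
theorem pderiv_moyal (m : ℕ) (v : Fin m ⊕ Fin m) (a b : PhaseAlg m) :
    MvPolynomial.pderiv v (moyal a b) =
      moyal (MvPolynomial.pderiv v a) b + moyal a (MvPolynomial.pderiv v b) := by
  have hlt : a.totalDegree < a.totalDegree + 1 := Nat.lt_succ_self _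
  have hlt' : (pderiv v a).totalDegree < a.totalDegree + 1 :=
    (totalDegree_pderiv_le v a).trans_lt (by omega)
  rw [moyal_eq_sum_moyalTerm hlt, moyal_eq_sum_moyalTerm hlt',
    moyal_eq_sum_moyalTerm hlt, map_sum, ← Finset.sum_add_distrib]
  refine Finset.sum_congr rfl fun k _ => ?_
  rw [pderiv_moyalTerm, pderivTensor_tmul, moyalTerm_add]
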